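/- If [κ', κ''] ∩ KEYS = ∅, then the total number of wake-ups of the receiver satisfies Σ_{t > 0} used_t ≤ 2k + 1. -/

import Mathlib

open scoped ENNReal

/-- `revBit k x` is the `k`-bit reversal of `x`:
if `x = (x_{k-1}, …, x_0)₂` then `revBit k x = (x_0, …, x_{k-1})₂`. -/
def revBit (k x : ℕ) : ℕ := ∑ i ∈ Finset.range k, (x / 2 ^ i % 2) * 2 ^ (k - 1 - i)


lemma sum_two_pow (n : ℕ) : ∑ i ∈ Finset.range n, 2 ^ i = 2 ^ n - 1 := by
  induction n with
  | zero => simp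
  | succ n ih =>
    rw [Finset.sum_range_succ, ih, pow_succ]
    have : 1 ≤ 2 ^ n := Nat.one_le_two_pow
    omega

lemma revBit_lt (k x : ℕ) : revBit k x < 2 ^ k := by
  have h1 : revBit k x ≤ ∑ i ∈ Finset.range k, 2 ^ (k - 1 - i) := by
    apply Finset.sum_le_sum
    intro i _
    have : x / 2 ^ i % 2 ≤ 1 := Nat.lt_succ_iff.mp (Nat.mod_lt _ (by norm_num))
    calc x / 2 ^ i % 2 * 2 ^ (k - 1 - i) ≤ 1 * 2 ^ (k - 1 - i) :=
          Nat.mul_le_mul_right _ this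
      _ = 2 ^ (k - 1 - i) := one_mul _
  have h2 : ∑ i ∈ Finset.range k, 2 ^ (k - 1 - i) = 2 ^ k - 1 := by
    rw [← Finset.sum_range_reflect, ← sum_two_pow k]
    apply Finset.sum_congr rfl
    intro i hi
    simp only [Finset.mem_range] at hi
    congr 1
    omega
  have : 1 ≤ 2 ^ k := Nat.one_le_two_pow
  omega

lemma bit_mod_pow (x i j : ℕ) (h : i < j) : x % 2 ^ j / 2 ^ i % 2 = x / 2 ^ i % 2 := by
  have h2 : (2:ℕ) ^ j = 2 ^ i * 2 ^ (j - i) := by rw [← pow_add]; congr 1; omega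
  conv_rhs => rw [← Nat.mod_add_div x (2 ^ j)]
  rw [h2, mul_assoc, Nat.add_mul_div_left _ _ (Nat.two_pow_pos i)]
  have h3 : (2:ℕ) ^ (j - i) = 2 * 2 ^ (j - i - 1) := by
    rw [← pow_succ']; congr 1; omega
  rw [h3, mul_assoc, Nat.add_mul_mod_self_left]

lemma revBit_mod (j x : ℕ) : revBit j (x % 2 ^ j) = revBit j x := by
  unfold revBit
  exact Finset.sum_congr rfl fun i hi => by
    rw [bit_mod_pow _ _ _ (Finset.mem_range.mp hi)]

lemma revBit_decompA (j x : ℕ) : revBit (j+1) x = 2 * revBit j x + x / 2 ^ j % 2 := by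
  unfold revBit
  rw [Finset.sum_range_succ, Finset.mul_sum]
  simp only [Nat.add_sub_cancel, Nat.sub_self]
  congr 1
  · apply Finset.sum_congr rfl
    intro i hi
    simp only [Finset.mem_range] at hi
    have : j - i = (j - 1 - i) + 1 := by omega
    rw [this, pow_succ]
    ring
  · simp

lemma revBit_decompB (j x : ℕ) : revBit (j+1) x = x % 2 * 2 ^ j + revBit j (x / 2) := by
  unfold revBit
  rw [Finset.sum_range_succ', add_comm]
  congr 1
  · simp
  · apply Finset.sum_congr rfl
    intro i hi
    simp only [Finset.mem_range] at hi
    rw [Nat.div_div_eq_div_mul, ← pow_succ']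
    congr 2
    omega

lemma revBit_revBit (j x : ℕ) (h : x < 2 ^ j) : revBit j (revBit j x) = x := by
  induction j generalizing x with
  | zero => interval_cases x; simp [revBit]
  | succ j ih =>
    have hR : revBit j (x / 2) < 2 ^ j := revBit_lt _ _
    rw [revBit_decompB j x, revBit_decompA]
    set y := x % 2 * 2 ^ j + revBit j (x / 2) with hy
    have hymod : y % 2 ^ j = revBit j (x / 2) := by
      rw [hy, add_comm, Nat.add_mul_mod_self_right, Nat.mod_eq_of_lt hR]
    have hydiv : y / 2 ^ j = x % 2 := by
      rw [hy, add_comm, Nat.add_mul_div_right _ _ (Nat.two_pow_pos j),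
        Nat.div_eq_of_lt hR]
      omega
    have h1 : revBit j y = x / 2 := by
      rw [← revBit_mod, hymod, ih _ (by
        rw [Nat.div_lt_iff_lt_mul (by norm_num), ← pow_succ]
        exact h)]
    rw [h1, hydiv, Nat.mod_mod_of_dvd _ (dvd_refl 2)]
    omega

lemma revBit_div (k j c : ℕ) (h : j ≤ k) :
    revBit k c / 2 ^ (k - j) = revBit j c := by
  unfold revBit
  rw [Finset.range_eq_Ico, ← Finset.sum_Ico_consecutive _ (Nat.zero_le j) h]
  have h1 : ∑ i ∈ Finset.Ico 0 j, c / 2 ^ i % 2 * 2 ^ (k - 1 - i)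
      = (∑ i ∈ Finset.range j, c / 2 ^ i % 2 * 2 ^ (j - 1 - i)) * 2 ^ (k - j) := by
    rw [Finset.sum_mul, Finset.range_eq_Ico]
    apply Finset.sum_congr rfl
    intro i hi
    simp only [Finset.mem_Ico] at hi
    rw [mul_assoc, ← pow_add]
    congr 2
    omega
  have h2 : ∑ i ∈ Finset.Ico j k, c / 2 ^ i % 2 * 2 ^ (k - 1 - i) < 2 ^ (k - j) := by
    calc ∑ i ∈ Finset.Ico j k, c / 2 ^ i % 2 * 2 ^ (k - 1 - i)
        ≤ ∑ i ∈ Finset.Ico j k, 2 ^ (k - 1 - i) := by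
          apply Finset.sum_le_sum
          intro i _
          have : c / 2 ^ i % 2 ≤ 1 := Nat.lt_succ_iff.mp (Nat.mod_lt _ (by norm_num))
          calc c / 2 ^ i % 2 * 2 ^ (k - 1 - i) ≤ 1 * 2 ^ (k - 1 - i) :=
                Nat.mul_le_mul_right _ this
            _ = 2 ^ (k - 1 - i) := one_mul _
      _ = ∑ i ∈ Finset.range (k - j), 2 ^ (k - 1 - (j + i)) := by
          rw [Finset.sum_Ico_eq_sum_range]
      _ = ∑ i ∈ Finset.range (k - j), 2 ^ (k - j - 1 - i) := by
          apply Finset.sum_congr rfl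
          intro i hi
          congr 1
          omega
      _ = 2 ^ (k - j) - 1 := by
          rw [← Finset.sum_range_reflect, ← sum_two_pow (k - j)]
          apply Finset.sum_congr rfl
          intro i hi
          simp only [Finset.mem_range] at hi
          congr 1
          omega
      _ < 2 ^ (k - j) := Nat.sub_lt (Nat.two_pow_pos _) one_pos
  rw [h1, mul_comm, Nat.mul_add_div (Nat.two_pow_pos (k-j)),
    Nat.div_eq_of_lt h2, add_zero, Finset.range_eq_Ico]

lemma revBit_inj (j : ℕ) {x y : ℕ} (hx : x < 2 ^ j) (hy : y < 2 ^ j)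
    (h : revBit j x = revBit j y) : x = y := by
  rw [← revBit_revBit j x hx, h, revBit_revBit j y hy]

lemma pattern_eq (k j c : ℕ) (h : j ≤ k) :
    revBit k (c % 2 ^ k) / 2 ^ (k - j) = revBit j (c % 2 ^ j) := by
  rw [revBit_div k j _ h, ← revBit_mod j (c % 2 ^ k),
    Nat.mod_mod_of_dvd _ (pow_dvd_pow 2 h), revBit_mod]

lemma exists_time (s j P : ℕ) (hP : P < 2 ^ j) :
    ∃ u < 2 ^ j, revBit j ((s + u) % 2 ^ j) = P := by
  set n := 2 ^ j with hn
  have hnpos : 0 < n := Nat.two_pow_pos _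
  set Q := revBit j P with hQ
  refine ⟨(Q + (n - s % n)) % n, Nat.mod_lt _ hnpos, ?_⟩
  have h1 : (s + (Q + (n - s % n)) % n) % n = (s + (Q + (n - s % n))) % n := by
    rw [Nat.add_mod, Nat.mod_mod_of_dvd, ← Nat.add_mod]
    exact dvd_refl n
  have hdm : n * (s / n) + s % n = s := Nat.div_add_mod s n
  have hr : s % n < n := Nat.mod_lt _ hnpos
  have h2 : s + (Q + (n - s % n)) = Q + n * (s / n + 1) := by
    have : n * (s / n + 1) = n * (s / n) + n := by ring
    omega
  rw [h1, h2, Nat.add_mul_mod_self_left, Nat.mod_eq_of_lt (revBit_lt _ _)]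
  exact revBit_revBit j P hP

/-- State `(lb_t, ub_t)` of the receiver's protocol searching for keys in `[a, b]`,
started at broadcaster slot `s`, where `key : ℤ → EReal` is the (extended) key
sequence with `key (-1) = ⊥` and `key (2^k) = ⊤`.  Initially `(lb_0, ub_0) = (0, 2^k - 1)`.
At receiver time `t`, with `x_t = rev_k((s + t) mod 2^k)`, if `lb_t ≤ x_t ≤ ub_t`
then: if `key x_t < a` then `lb_{t+1} = x_t + 1`; if `b < key x_t` then
`ub_{t+1} = x_t - 1`; otherwise the state is unchanged. -/
noncomputable def rboState (k s : ℕ) (key : ℤ → EReal) (a b : ℝ) : ℕ → ℤ × ℤ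
  | 0 => (0, 2 ^ k - 1)
  | t + 1 =>
    let p := rboState k s key a b t
    let x : ℤ := revBit k ((s + t) % 2 ^ k)
    if p.1 ≤ x ∧ x ≤ p.2 then
      if key x < (a : EReal) then (x + 1, p.2)
      else if (b : EReal) < key x then (p.1, x - 1)
      else p
    else p

/-- `lb_t`. -/
noncomputable def lb (k s : ℕ) (key : ℤ → EReal) (a b : ℝ) (t : ℕ) : ℤ :=
  (rboState k s key a b t).1

/-- `ub_t`. -/
noncomputable def ub (k s : ℕ) (key : ℤ → EReal) (a b : ℝ) (t : ℕ) : ℤ :=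
  (rboState k s key a b t).2

/-- `used_t = 1` if the receiver wakes up at receiver time `t`,
i.e. if `lb_t ≤ rev_k((s+t) mod 2^k) ≤ ub_t`; otherwise `used_t = 0`. -/
noncomputable def used (k s : ℕ) (key : ℤ → EReal) (a b : ℝ) (t : ℕ) : ℕ :=
  if lb k s key a b t ≤ (revBit k ((s + t) % 2 ^ k) : ℤ) ∧
     (revBit k ((s + t) % 2 ^ k) : ℤ) ≤ ub k s key a b t then 1 else 0


section Protocol

variable (k s : ℕ) (key : ℤ → EReal) (a b : ℝ) (m : ℤ)

/-- The sample value at receiver time `t`, as an integer. -/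
noncomputable def Xv (k s : ℕ) (t : ℕ) : ℤ := (revBit k ((s + t) % 2 ^ k) : ℤ)

lemma Xv_nonneg (t : ℕ) : 0 ≤ Xv k s t := Int.natCast_nonneg _

lemma Xv_lt (t : ℕ) : Xv k s t < 2 ^ k := by
  have := revBit_lt k ((s + t) % 2 ^ k)
  unfold Xv
  exact_mod_cast this

lemma state_succ (t : ℕ) : rboState k s key a b (t + 1) =
    (let p := rboState k s key a b t
     let x : ℤ := revBit k ((s + t) % 2 ^ k)
     if p.1 ≤ x ∧ x ≤ p.2 then
       if key x < (a : EReal) then (x + 1, p.2)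
       else if (b : EReal) < key x then (p.1, x - 1)
       else p
     else p) := by
  rw [rboState]

variable (hab : a ≤ b)
  (hlt : ∀ x : ℤ, 0 ≤ x → x < 2 ^ k → x < m → key x < (a : EReal))
  (hgt : ∀ x : ℤ, 0 ≤ x → x < 2 ^ k → m ≤ x → (b : EReal) < key x)

include hlt in
lemma step_below (t : ℕ) (h1 : lb k s key a b t ≤ Xv k s t)
    (h2 : Xv k s t ≤ ub k s key a b t) (hxm : Xv k s t < m) :
    lb k s key a b (t + 1) = Xv k s t + 1 ∧
      ub k s key a b (t + 1) = ub k s key a b t := by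
  have hk : key (Xv k s t) < (a : EReal) :=
    hlt _ (Xv_nonneg k s t) (Xv_lt k s t) hxm
  simp only [lb, ub, Xv] at h1 h2 hk ⊢
  rw [state_succ]
  simp only []
  rw [if_pos (And.intro h1 h2), if_pos hk]
  exact ⟨rfl, rfl⟩

include hab hgt in
lemma step_above (t : ℕ) (h1 : lb k s key a b t ≤ Xv k s t)
    (h2 : Xv k s t ≤ ub k s key a b t) (hxm : m ≤ Xv k s t) :
    lb k s key a b (t + 1) = lb k s key a b t ∧
      ub k s key a b (t + 1) = Xv k s t - 1 := by
  have hk : (b : EReal) < key (Xv k s t) :=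
    hgt _ (Xv_nonneg k s t) (Xv_lt k s t) hxm
  have hk2 : ¬ key (Xv k s t) < (a : EReal) := by
    have hab' : (a : EReal) ≤ (b : EReal) := by exact_mod_cast hab
    exact not_lt.mpr (le_of_lt (lt_of_le_of_lt hab' hk))
  simp only [lb, ub, Xv] at h1 h2 hk hk2 ⊢
  rw [state_succ]
  simp only []
  rw [if_pos (And.intro h1 h2), if_neg hk2, if_pos hk]
  exact ⟨rfl, rfl⟩

lemma step_unused (t : ℕ)
    (h : ¬(lb k s key a b t ≤ Xv k s t ∧ Xv k s t ≤ ub k s key a b t)) :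
    lb k s key a b (t + 1) = lb k s key a b t ∧
      ub k s key a b (t + 1) = ub k s key a b t := by
  simp only [lb, ub, Xv] at h ⊢
  rw [state_succ]
  simp only []
  rw [if_neg h]
  exact ⟨rfl, rfl⟩

include hab hlt hgt in
lemma step_mono (t : ℕ) : lb k s key a b t ≤ lb k s key a b (t + 1) ∧
    ub k s key a b (t + 1) ≤ ub k s key a b t := by
  by_cases h : lb k s key a b t ≤ Xv k s t ∧ Xv k s t ≤ ub k s key a b t
  · rcases lt_or_ge (Xv k s t) m with hxm | hxm
    · obtain ⟨e1, e2⟩ := step_below k s key a b m hlt t h.1 h.2 hxm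
      omega
    · obtain ⟨e1, e2⟩ := step_above k s key a b m hab hgt t h.1 h.2 hxm
      omega
  · obtain ⟨e1, e2⟩ := step_unused k s key a b t h
    omega

include hab hlt hgt in
lemma mono_le {u t : ℕ} (h : u ≤ t) : lb k s key a b u ≤ lb k s key a b t ∧
    ub k s key a b t ≤ ub k s key a b u := by
  induction t with
  | zero =>
    have : u = 0 := Nat.le_antisymm h (Nat.zero_le u)
    subst this
    exact ⟨le_rfl, le_rfl⟩
  | succ t ih =>
    by_cases hu : u ≤ t
    · obtain ⟨e1, e2⟩ := ih hu
      obtain ⟨f1, f2⟩ := step_mono k s key a b m hab hlt hgt t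
      exact ⟨le_trans e1 f1, le_trans f2 e2⟩
    · have : u = t + 1 := by omega
      subst this
      exact ⟨le_rfl, le_rfl⟩

include hab hlt hgt in
lemma bounds_lemma (hm0 : 0 ≤ m) (hmn : m ≤ 2 ^ k) (t : ℕ) :
    lb k s key a b t ≤ m ∧ m - 1 ≤ ub k s key a b t := by
  induction t with
  | zero =>
    constructor
    · exact hm0
    · have : (1:ℤ) ≤ 2 ^ k := by exact_mod_cast Nat.one_le_two_pow
      simp only [lb, ub, rboState]
      omega
  | succ t ih =>
    by_cases h : lb k s key a b t ≤ Xv k s t ∧ Xv k s t ≤ ub k s key a b t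
    · rcases lt_or_ge (Xv k s t) m with hxm | hxm
      · obtain ⟨e1, e2⟩ := step_below k s key a b m hlt t h.1 h.2 hxm
        omega
      · obtain ⟨e1, e2⟩ := step_above k s key a b m hab hgt t h.1 h.2 hxm
        omega
    · obtain ⟨e1, e2⟩ := step_unused k s key a b t h
      omega

include hab hlt hgt in
lemma sep_lemma (hm0 : 0 ≤ m) (hmn : m ≤ 2 ^ k) (t u : ℕ) (hut : u < t) :
    (Xv k s u < m → Xv k s u < lb k s key a b t) ∧
      (m ≤ Xv k s u → ub k s key a b t < Xv k s u) := by
  induction t with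
  | zero => omega
  | succ t ih =>
    rcases Nat.lt_succ_iff_lt_or_eq.mp hut with hu | hu
    · obtain ⟨e1, e2⟩ := ih hu
      obtain ⟨f1, f2⟩ := step_mono k s key a b m hab hlt hgt t
      exact ⟨fun h => lt_of_lt_of_le (e1 h) f1, fun h => lt_of_le_of_lt f2 (e2 h)⟩
    · subst hu
      by_cases h : lb k s key a b u ≤ Xv k s u ∧ Xv k s u ≤ ub k s key a b u
      · rcases lt_or_ge (Xv k s u) m with hxm | hxm
        · obtain ⟨e1, e2⟩ := step_below k s key a b m hlt u h.1 h.2 hxm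
          omega
        · obtain ⟨e1, e2⟩ := step_above k s key a b m hab hgt u h.1 h.2 hxm
          omega
      · obtain ⟨e1, e2⟩ := step_unused k s key a b u h
        obtain ⟨g1, g2⟩ := bounds_lemma k s key a b m hab hlt hgt hm0 hmn u
        constructor
        · intro hxm
          rw [e1]
          rcases not_and_or.mp h with h' | h'
          · omega
          · omega
        · intro hxm
          rw [e2]
          rcases not_and_or.mp h with h' | h'
          · omega
          · omega

lemma used_eq_one_iff (t : ℕ) : used k s key a b t = 1 ↔
    (lb k s key a b t ≤ Xv k s t ∧ Xv k s t ≤ ub k s key a b t) := by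
  unfold used
  simp only [Xv]
  split
  · simp_all
  · simp_all

lemma used_le_one (t : ℕ) : used k s key a b t ≤ 1 := by
  unfold used
  split <;> omega

include hab hlt hgt in
lemma used_sep (hm0 : 0 ≤ m) (hmn : m ≤ 2 ^ k) (u t : ℕ) (hut : u < t)
    (h : used k s key a b t = 1) :
    (Xv k s u < m → Xv k s u < Xv k s t) ∧ (m ≤ Xv k s u → Xv k s t < Xv k s u) := by
  obtain ⟨h1, h2⟩ := (used_eq_one_iff k s key a b t).mp h
  obtain ⟨e1, e2⟩ := sep_lemma k s key a b m hab hlt hgt hm0 hmn t u hut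
  exact ⟨fun hx => lt_of_lt_of_le (e1 hx) h1, fun hx => lt_of_le_of_lt h2 (e2 hx)⟩

include hab hlt hgt in
lemma not_used_late (hm0 : 0 ≤ m) (hmn : m ≤ 2 ^ k) (t : ℕ) (ht : 2 ^ k ≤ t) :
    used k s key a b t = 0 := by
  have hpos : 0 < 2 ^ k := Nat.two_pow_pos _
  set u := t - 2 ^ k with hu
  have hut : u < t := by omega
  have hXeq : Xv k s u = Xv k s t := by
    unfold Xv
    congr 2
    have : s + t = s + u + 2 ^ k := by omega
    rw [this, Nat.add_mod_right]
  obtain ⟨e1, e2⟩ := sep_lemma k s key a b m hab hlt hgt hm0 hmn t u hut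
  unfold used
  rw [if_neg]
  intro hcon
  have hc1 : lb k s key a b t ≤ Xv k s t := hcon.1
  have hc2 : Xv k s t ≤ ub k s key a b t := hcon.2
  rcases lt_or_ge (Xv k s u) m with hxm | hxm
  · have := e1 hxm
    omega
  · have := e2 hxm
    omega

include hab hlt hgt in
lemma phase_bound (hm0 : 0 ≤ m) (hmn : m ≤ 2 ^ k) (j : ℕ) (hj : j < k) :
    ∑ t ∈ Finset.Ico (2 ^ j) (2 ^ (j + 1)), used k s key a b t ≤ 2 := by
  classical
  have hjk : j ≤ k := le_of_lt hj
  have hTpos : 0 < 2 ^ j := Nat.two_pow_pos _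
  have hDpos : 0 < 2 ^ (k - j) := Nat.two_pow_pos _
  have hTD : 2 ^ j * 2 ^ (k - j) = 2 ^ k := by rw [← pow_add]; congr 1; omega
  set Y : ℕ → ℕ := fun t => revBit k ((s + t) % 2 ^ k) with hY
  have hYlt : ∀ t, Y t < 2 ^ k := fun t => revBit_lt _ _
  have hYdivlt : ∀ t, Y t / 2 ^ (k - j) < 2 ^ j := by
    intro t
    rw [Nat.div_lt_iff_lt_mul hDpos, hTD]
    exact hYlt t
  have hpatt : ∀ t, Y t / 2 ^ (k - j) = revBit j ((s + t) % 2 ^ j) := by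
    intro t
    rw [hY]
    exact pattern_eq k j (s + t) hjk
  -- injectivity of patterns within the phase
  have hinj : ∀ t1 ∈ Finset.Ico (2 ^ j) (2 ^ (j + 1)),
      ∀ t2 ∈ Finset.Ico (2 ^ j) (2 ^ (j + 1)),
      Y t1 / 2 ^ (k - j) = Y t2 / 2 ^ (k - j) → t1 = t2 := by
    intro t1 h1 t2 h2 he
    rw [hpatt, hpatt] at he
    have e2 : (s + t1) % 2 ^ j = (s + t2) % 2 ^ j :=
      revBit_inj j (Nat.mod_lt _ hTpos) (Nat.mod_lt _ hTpos) he
    simp only [Finset.mem_Ico] at h1 h2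
    have hp1 : 2 ^ (j + 1) = 2 ^ j + 2 ^ j := by rw [pow_succ]; ring
    have hr1 : s + t1 = (s + (t1 - 2 ^ j)) + 2 ^ j := by omega
    have hr2 : s + t2 = (s + (t2 - 2 ^ j)) + 2 ^ j := by omega
    rw [hr1, hr2, Nat.add_mod_right, Nat.add_mod_right] at e2
    have e3 : (t1 - 2 ^ j) ≡ (t2 - 2 ^ j) [MOD 2 ^ j] :=
      Nat.ModEq.add_left_cancel' s e2
    unfold Nat.ModEq at e3
    rw [Nat.mod_eq_of_lt (by omega), Nat.mod_eq_of_lt (by omega)] at e3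
    omega
  -- coverage before the phase
  have hcover : ∀ P, P < 2 ^ j → ∃ u, u < 2 ^ j ∧ Y u / 2 ^ (k - j) = P := by
    intro P hP
    obtain ⟨u, hu, h⟩ := exists_time s j P hP
    exact ⟨u, hu, by rw [hpatt]; exact h⟩
  -- separation in terms of Y
  have hsepY : ∀ u t, u < t → used k s key a b t = 1 →
      (((Y u : ℤ) < m → Y u < Y t) ∧ (m ≤ (Y u : ℤ) → Y t < Y u)) := by
    intro u t hut h
    obtain ⟨e1, e2⟩ := used_sep k s key a b m hab hlt hgt hm0 hmn u t hut h
    constructor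
    · intro hx
      have := e1 hx
      unfold Xv at this
      exact_mod_cast this
    · intro hx
      have := e2 hx
      unfold Xv at this
      exact_mod_cast this
  -- bracketing: the patterns of wake-ups in the phase take at most two values
  obtain ⟨P1, P2, hbr⟩ : ∃ P1 P2 : ℕ, ∀ t, 2 ^ j ≤ t → used k s key a b t = 1 →
      Y t / 2 ^ (k - j) = P1 ∨ Y t / 2 ^ (k - j) = P2 := by
    by_cases h0 : m ≤ 0
    · -- everything is above the threshold
      obtain ⟨u, hu, hud⟩ := hcover 0 hTpos
      refine ⟨0, 0, fun t ht hused => ?_⟩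
      have hsep := (hsepY u t (lt_of_lt_of_le hu ht) hused).2
        (le_trans h0 (Int.natCast_nonneg _))
      have hYu : Y u < 1 * 2 ^ (k - j) := by
        rw [← Nat.div_lt_iff_lt_mul hDpos, hud]
        norm_num
      left
      exact Nat.div_eq_of_lt (by omega)
    · by_cases hn' : (2 ^ k : ℤ) ≤ m
      · -- everything is below the threshold
        obtain ⟨u, hu, hud⟩ := hcover (2 ^ j - 1) (by omega)
        refine ⟨2 ^ j - 1, 2 ^ j - 1, fun t ht hused => ?_⟩
        have hYum : (Y u : ℤ) < m := by
          have := hYlt u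
          have : (Y u : ℤ) < 2 ^ k := by exact_mod_cast this
          omega
        have hsep := (hsepY u t (lt_of_lt_of_le hu ht) hused).1 hYum
        have hlow : (2 ^ j - 1) * 2 ^ (k - j) ≤ Y u := by
          rw [← hud]
          exact Nat.div_mul_le_self _ _
        have h1 : 2 ^ j - 1 ≤ Y t / 2 ^ (k - j) := by
          rw [Nat.le_div_iff_mul_le hDpos]
          omega
        have h2 := hYdivlt t
        left
        omega
      · -- 0 < m < 2^k
        push_neg at h0 hn'
        set M := (m - 1).toNat with hM
        have hMm : (M : ℤ) = m - 1 := Int.toNat_of_nonneg (by omega)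
        have hMlt : M < 2 ^ k := by
          have : (M : ℤ) < (2 ^ k : ℕ) := by push_cast; omega
          exact_mod_cast this
        obtain ⟨q, hqdef⟩ : ∃ q, M / 2 ^ (k - j) = q := ⟨_, rfl⟩
        have hqT : q < 2 ^ j := by
          rw [← hqdef, Nat.div_lt_iff_lt_mul hDpos, hTD]
          exact hMlt
        have hqlow : q * 2 ^ (k - j) ≤ M := by
          rw [← hqdef]; exact Nat.div_mul_le_self _ _
        have hqhigh : M < (q + 1) * 2 ^ (k - j) := by
          rw [← Nat.div_lt_iff_lt_mul hDpos, hqdef]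
          omega
        obtain ⟨u0, hu0T, hu0⟩ := hcover q hqT
        have hu0low : q * 2 ^ (k - j) ≤ Y u0 := by
          rw [← hu0]; exact Nat.div_mul_le_self _ _
        have hu0high : Y u0 < (q + 1) * 2 ^ (k - j) := by
          rw [← Nat.div_lt_iff_lt_mul hDpos, hu0]
          omega
        rcases lt_or_ge ((Y u0 : ℤ)) m with hbelow | habove
        · -- the guard point below m
          by_cases hq1 : q + 1 < 2 ^ j
          · obtain ⟨u1, hu1T, hu1⟩ := hcover (q + 1) hq1
            have hu1low : (q + 1) * 2 ^ (k - j) ≤ Y u1 := by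
              rw [← hu1]; exact Nat.div_mul_le_self _ _
            have hu1high : Y u1 < (q + 1 + 1) * 2 ^ (k - j) := by
              rw [← Nat.div_lt_iff_lt_mul hDpos, hu1]
              omega
            have hu1m : m ≤ (Y u1 : ℤ) := by
              have h5 : M < Y u1 := by omega
              have h6 : (M : ℤ) < (Y u1 : ℤ) := by exact_mod_cast h5
              omega
            refine ⟨q, q + 1, fun t ht hused => ?_⟩
            have hs0 := (hsepY u0 t (lt_of_lt_of_le hu0T ht) hused).1 hbelow
            have hs1 := (hsepY u1 t (lt_of_lt_of_le hu1T ht) hused).2 hu1m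
            have hA : q ≤ Y t / 2 ^ (k - j) :=
              (Nat.le_div_iff_mul_le hDpos).mpr (by omega)
            have hB : Y t / 2 ^ (k - j) < q + 1 + 1 :=
              (Nat.div_lt_iff_lt_mul hDpos).mpr (by omega)
            omega
          · refine ⟨q, q, fun t ht hused => ?_⟩
            have hs0 := (hsepY u0 t (lt_of_lt_of_le hu0T ht) hused).1 hbelow
            have hA : q ≤ Y t / 2 ^ (k - j) :=
              (Nat.le_div_iff_mul_le hDpos).mpr (by omega)
            have hB := hYdivlt t
            left
            omega
        · -- the guard point at or above m
          by_cases hq0 : q = 0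
          · refine ⟨0, 0, fun t ht hused => ?_⟩
            have hs0 := (hsepY u0 t (lt_of_lt_of_le hu0T ht) hused).2 habove
            rw [hq0] at hu0high
            have hu0high' : Y u0 < 2 ^ (k - j) := by omega
            left
            exact Nat.div_eq_of_lt (by omega)
          · obtain ⟨q', rfl⟩ : ∃ q', q = q' + 1 := ⟨q - 1, by omega⟩
            obtain ⟨u1, hu1T, hu1⟩ := hcover q' (by omega)
            have hu1low : q' * 2 ^ (k - j) ≤ Y u1 := by
              rw [← hu1]; exact Nat.div_mul_le_self _ _
            have hu1high : Y u1 < (q' + 1) * 2 ^ (k - j) := by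
              rw [← Nat.div_lt_iff_lt_mul hDpos, hu1]
              omega
            have hu1m : (Y u1 : ℤ) < m := by
              have h5 : Y u1 < M := by omega
              have h6 : (Y u1 : ℤ) < (M : ℤ) := by exact_mod_cast h5
              omega
            refine ⟨q', q' + 1, fun t ht hused => ?_⟩
            have hs0 := (hsepY u0 t (lt_of_lt_of_le hu0T ht) hused).2 habove
            have hs1 := (hsepY u1 t (lt_of_lt_of_le hu1T ht) hused).1 hu1m
            have hA : q' ≤ Y t / 2 ^ (k - j) :=
              (Nat.le_div_iff_mul_le hDpos).mpr (by omega)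
            have hB : Y t / 2 ^ (k - j) < q' + 1 + 1 :=
              (Nat.div_lt_iff_lt_mul hDpos).mpr (by omega)
            omega
  -- counting
  set F := (Finset.Ico (2 ^ j) (2 ^ (j + 1))).filter
    (fun t => used k s key a b t = 1) with hF
  have hsub : F ⊆ Finset.Ico (2 ^ j) (2 ^ (j + 1)) := Finset.filter_subset _ _
  have hcard : F.card ≤ 2 := by
    have hinjF : Set.InjOn (fun t => Y t / 2 ^ (k - j)) F := by
      intro t1 h1 t2 h2 he
      exact hinj t1 (hsub h1) t2 (hsub h2) he
    rw [← Finset.card_image_of_injOn hinjF]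
    refine le_trans (Finset.card_le_card (t := ({P1, P2} : Finset ℕ)) ?_) ?_
    · intro P hP
      simp only [Finset.mem_image] at hP
      obtain ⟨t, htF, rfl⟩ := hP
      obtain ⟨htI, htu⟩ := Finset.mem_filter.mp htF
      have hTt : 2 ^ j ≤ t := (Finset.mem_Ico.mp htI).1
      rcases hbr t hTt htu with h | h <;> simp [h]
    · exact le_trans (Finset.card_insert_le _ _) (by simp)
  calc ∑ t ∈ Finset.Ico (2 ^ j) (2 ^ (j + 1)), used k s key a b t
      = (∑ t ∈ F, used k s key a b t) +
        ∑ t ∈ (Finset.Ico (2 ^ j) (2 ^ (j + 1))).filter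
          (fun t => ¬ used k s key a b t = 1), used k s key a b t := by
        rw [Finset.sum_filter_add_sum_filter_not]
    _ = ∑ t ∈ F, used k s key a b t := by
        have hz : ∑ t ∈ (Finset.Ico (2 ^ j) (2 ^ (j + 1))).filter
            (fun t => ¬ used k s key a b t = 1), used k s key a b t = 0 := by
          apply Finset.sum_eq_zero
          intro t ht
          have h1 := (Finset.mem_filter.mp ht).2
          have h2 := used_le_one k s key a b t
          omega
        rw [hz, add_zero]
    _ ≤ ∑ _t ∈ F, 1 := Finset.sum_le_sum fun t _ => used_le_one k s key a b t
    _ = F.card := by simp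
    _ ≤ 2 := hcard

include hab hlt hgt in
lemma total_bound (hm0 : 0 ≤ m) (hmn : m ≤ 2 ^ k) :
    ∑ t ∈ Finset.Ico 1 (2 ^ k), used k s key a b t ≤ 2 * k := by
  have main : ∀ K, K ≤ k → ∑ t ∈ Finset.Ico 1 (2 ^ K), used k s key a b t ≤ 2 * K := by
    intro K
    induction K with
    | zero => intro _; simp
    | succ K ih =>
      intro hK
      have h1 : (1:ℕ) ≤ 2 ^ K := Nat.one_le_two_pow
      have h2 : (2:ℕ) ^ K ≤ 2 ^ (K + 1) := Nat.pow_le_pow_right (by norm_num) (by omega)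
      rw [← Finset.sum_Ico_consecutive _ h1 h2]
      have e1 := phase_bound k s key a b m hab hlt hgt hm0 hmn K (by omega)
      have e2 := ih (by omega)
      omega
  exact main k le_rfl

end Protocol
/-- Lemma 7 (total-Lemma): if `[a, b] ∩ KEYS = ∅`, then `∑_{t > 0} used_t ≤ 2k + 1`. -/
theorem stmt_6 (k s : ℕ) (hs : s < 2 ^ k)
    (key : ℤ → EReal) (a b : ℝ) (hab : a ≤ b)
    (hbot : key (-1) = ⊥) (htop : key (2 ^ k) = ⊤)
    (hsorted : ∀ i : ℤ, -1 ≤ i → i ≤ 2 ^ k - 1 → key i ≤ key (i + 1))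
    (hfin : ∀ i : ℤ, 0 ≤ i → i ≤ 2 ^ k - 1 → ∃ x : ℝ, key i = (x : EReal))
    (hempty : ∀ i : ℤ, 0 ≤ i → i ≤ 2 ^ k - 1 →
      ¬((a : EReal) ≤ key i ∧ key i ≤ (b : EReal))) :
    (∑' t : ℕ, Set.indicator {t : ℕ | 0 < t}
        (fun t => ((used k s key a b t : ℕ) : ℝ≥0∞)) t) ≤
      2 * (k : ℝ≥0∞) + 1 := by
  classical
  have hcast : ((2 ^ k : ℕ) : ℤ) = (2 : ℤ) ^ k := by push_cast; ring
  -- monotonicity of key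
  have mono : ∀ (i : ℤ) (d : ℕ), -1 ≤ i → i + d ≤ 2 ^ k → key i ≤ key (i + d) := by
    intro i d
    induction d with
    | zero => intro _ _; simp
    | succ d ih =>
      intro h1 h2
      have e : (((d + 1 : ℕ)) : ℤ) = (d : ℤ) + 1 := by push_cast; ring
      rw [e] at h2 ⊢
      have hstep := hsorted (i + d) (by omega) (by omega)
      have hih := ih h1 (by omega)
      rw [← add_assoc]
      exact le_trans hih hstep
  -- the threshold
  have hex : ∃ i : ℕ, 2 ^ k ≤ i ∨ ¬ key i < (a : EReal) := ⟨2 ^ k, Or.inl le_rfl⟩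
  have hspec := Nat.find_spec hex
  have hm'le : Nat.find hex ≤ 2 ^ k := Nat.find_le (Or.inl le_rfl)
  set m' := Nat.find hex with hm'def
  have hm0 : (0 : ℤ) ≤ (m' : ℤ) := Int.natCast_nonneg _
  have hmn : (m' : ℤ) ≤ 2 ^ k := by
    rw [← hcast]
    exact_mod_cast hm'le
  have hlt : ∀ x : ℤ, 0 ≤ x → x < 2 ^ k → x < (m' : ℤ) → key x < (a : EReal) := by
    intro x hx0 hxn hxm
    have hx : x.toNat < m' := by omega
    have hnot := Nat.find_min hex hx
    rcases not_or.mp hnot with ⟨h1, h2⟩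
    rw [not_not] at h2
    rw [← Int.toNat_of_nonneg hx0]
    exact h2
  have hgt : ∀ x : ℤ, 0 ≤ x → x < 2 ^ k → (m' : ℤ) ≤ x → (b : EReal) < key x := by
    intro x hx0 hxn hxm
    have hm'ltk : m' < 2 ^ k := by
      have : (m' : ℤ) < 2 ^ k := by omega
      rw [← hcast] at this
      exact_mod_cast this
    have hPm' : ¬ key m' < (a : EReal) := by
      rcases hspec with h | h
      · omega
      · exact h
    have hkey_a : (a : EReal) ≤ key m' := not_lt.mp hPm'
    have hne := hempty m' hm0 (by omega)
    have hbm : (b : EReal) < key m' := by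
      rcases lt_or_ge (b : EReal) (key m') with h | h
      · exact h
      · exact absurd ⟨hkey_a, h⟩ hne
    have hmono := mono (m' : ℤ) (x - m').toNat (by omega)
      (by rw [Int.toNat_of_nonneg (by omega)]; omega)
    rw [Int.toNat_of_nonneg (by omega)] at hmono
    have e : (m' : ℤ) + (x - m') = x := by ring
    rw [e] at hmono
    exact lt_of_lt_of_le hbm hmono
  -- the tsum is a finite sum
  have hpos : (0:ℕ) < 2 ^ k := Nat.two_pow_pos _
  have hzero : ∀ t ∉ Finset.range (2 ^ k), Set.indicator {t : ℕ | 0 < t}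
      (fun t => ((used k s key a b t : ℕ) : ℝ≥0∞)) t = 0 := by
    intro t ht
    simp only [Finset.mem_range, not_lt] at ht
    have h1 : t ∈ {t : ℕ | 0 < t} := by
      simp only [Set.mem_setOf_eq]
      omega
    rw [Set.indicator_of_mem h1]
    rw [not_used_late k s key a b (m' : ℤ) hab hlt hgt hm0 hmn t ht]
    simp
  rw [tsum_eq_sum hzero]
  have h1k : 1 ≤ 2 ^ k := Nat.one_le_two_pow
  rw [Finset.range_eq_Ico, ← Finset.sum_Ico_consecutive _ (Nat.zero_le 1) h1k]
  have hz0 : ∑ t ∈ Finset.Ico 0 1, Set.indicator {t : ℕ | 0 < t}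
      (fun t => ((used k s key a b t : ℕ) : ℝ≥0∞)) t = 0 := by
    have : Finset.Ico 0 1 = {0} := rfl
    rw [this, Finset.sum_singleton, Set.indicator_of_notMem (by simp)]
  rw [hz0, zero_add]
  have heq : ∀ t ∈ Finset.Ico 1 (2 ^ k), Set.indicator {t : ℕ | 0 < t}
      (fun t => ((used k s key a b t : ℕ) : ℝ≥0∞)) t
      = ((used k s key a b t : ℕ) : ℝ≥0∞) := by
    intro t ht
    have h1 : t ∈ {t : ℕ | 0 < t} := by
      simp only [Set.mem_setOf_eq]
      have := (Finset.mem_Ico.mp ht).1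
      omega
    exact Set.indicator_of_mem h1 _
  rw [Finset.sum_congr rfl heq, ← Nat.cast_sum]
  have hbound := total_bound k s key a b (m' : ℤ) hab hlt hgt hm0 hmn
  calc ((∑ t ∈ Finset.Ico 1 (2 ^ k), used k s key a b t : ℕ) : ℝ≥0∞)
      ≤ ((2 * k : ℕ) : ℝ≥0∞) := Nat.cast_le.mpr hbound
    _ = 2 * (k : ℝ≥0∞) := by push_cast; ring
    _ ≤ 2 * (k : ℝ≥0∞) + 1 := le_self_add
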